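/- arXiv:2408.14366 — 2 statements merged into one kernel-verified Lean document; each statement's English description precedes it below -/
import Mathlib

section
/- There exists a real matrix whose columns are the principal right-singular vectors of a real channel matrix H̄ ∈ ℝ^{2×4} that cannot be written in the coupled block form [[F_I; F_Q] with the structure (F_I, −F_Q; F_Q, F_I)]: concretely, for H̄ = [[2,0,0,−1],[0,1,−1,0]], the two top right-singular vectors v₁ = (−2/√5, 0, 0, 1/√5)ᵀ and v₂ = (0, −1/√2, 1/√2, 0)ᵀ do not form the columns of any 4×2 matrix of the form [[a, −c],[b, −d],[c, a],[d, b]]. -/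
/-- The principal right-singular vectors of `H̄ = [[2,0,0,-1],[0,1,-1,0]]`,
namely `v₁ = (-2/√5, 0, 0, 1/√5)ᵀ` and `v₂ = (0, -1/√2, 1/√2, 0)ᵀ`, cannot be
the columns of any block-coupled matrix `[[a,-c],[b,-d],[c,a],[d,b]]`. -/
theorem singular_vectors_violate_block_coupling :
    ¬ ∃ a b c d : ℝ,
      (![a, b, c, d] : Fin 4 → ℝ) =
        ![-2 / Real.sqrt 5, 0, 0, 1 / Real.sqrt 5] ∧
      (![-c, -d, a, b] : Fin 4 → ℝ) =
        ![0, -1 / Real.sqrt 2, 1 / Real.sqrt 2, 0] := by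
  rintro ⟨a, b, c, d, h1, h2⟩
  have ha1 : a = -2 / Real.sqrt 5 := congrFun h1 0
  have ha2 : a = 1 / Real.sqrt 2 := congrFun h2 2
  have h5 : (0:ℝ) < Real.sqrt 5 := Real.sqrt_pos.mpr (by norm_num)
  have h2' : (0:ℝ) < Real.sqrt 2 := Real.sqrt_pos.mpr (by norm_num)
  have : -2 / Real.sqrt 5 < 0 := div_neg_of_neg_of_pos (by norm_num) h5
  have : (0:ℝ) < 1 / Real.sqrt 2 := by positivity
  linarith [ha1.symm.trans ha2]
end

section
/- Auxiliary-matrix equivalence (Lemma 3 of the paper): Fix F̄ ∈ ℝ^{m×s} and a set 𝒜 ⊆ ℝ^{m×r} with s ≤ r, and γ > 0. Then the infimum over A ∈ 𝒜 and column-orthonormal D_u ∈ ℝ^{r×s} (D_uᵀD_u = I_s) of ‖F̄ − γ A D_u‖_F² equals the infimum over A ∈ 𝒜, orthogonal D̃ ∈ ℝ^{r×r} (with D_u = first s columns of D̃), and arbitrary F_c ∈ ℝ^{m×(r−s)} of ‖(F̄, F_c) − γ A D̃‖_F², where (F̄, F_c) denotes horizontal concatenation. -/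
/-!
Splitting the columns of `(F̄, F_c) − γ A D̃` along `D̃ = (D_u, D_c)`, the objective is
`‖F̄ − γ A D_u‖_F² + ‖F_c − γ A D_c‖_F²`. Since the second summand is nonnegative, every
augmented value dominates an original one. Conversely, every column-orthonormal `D_u` is the first
block of an orthogonal `D̃` (complete its columns to an orthonormal basis of `ℝʳ`), and with
`F_c = γ A D_c` the second summand vanishes, so every original value is an augmented one.
-/

open Matrix

/-- Squared Frobenius norm, `‖M‖_F² = Tr(MᵀM)`. -/
def frobSq {m n : Type*} [Fintype m] [Fintype n]
    (M : Matrix m n ℝ) : ℝ := (Mᵀ * M).trace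

section Frobenius

variable {m n n₁ n₂ : Type*} [Fintype m] [Fintype n] [Fintype n₁] [Fintype n₂]

lemma frobSq_eq_sum_sq (M : Matrix m n ℝ) : frobSq M = ∑ j, ∑ i, M i j ^ 2 := by
  simp [frobSq, trace, mul_apply, sq]

lemma frobSq_nonneg (M : Matrix m n ℝ) : 0 ≤ frobSq M := by
  rw [frobSq_eq_sum_sq]
  positivity

@[simp]
lemma frobSq_zero : frobSq (0 : Matrix m n ℝ) = 0 := by
  simp [frobSq]

lemma frobSq_fromCols (M₁ : Matrix m n₁ ℝ) (M₂ : Matrix m n₂ ℝ) :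
    frobSq (fromCols M₁ M₂) = frobSq M₁ + frobSq M₂ := by
  simp [frobSq_eq_sum_sq, Fintype.sum_sum_type]

lemma frobSq_fromCols_sub_smul_mul (F : Matrix m n₁ ℝ) (Fc : Matrix m n₂ ℝ) (γ : ℝ)
    (A : Matrix m n ℝ) (D : Matrix n (n₁ ⊕ n₂) ℝ) :
    frobSq (fromCols F Fc - γ • (A * D)) =
      frobSq (F - γ • (A * D.toCols₁)) + frobSq (Fc - γ • (A * D.toCols₂)) := by
  have hsplit : fromCols F Fc - γ • (A * D) =
      fromCols (F - γ • (A * D.toCols₁)) (Fc - γ • (A * D.toCols₂)) := by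
    ext i (j | j) <;> simp [mul_apply]
  rw [hsplit, frobSq_fromCols]

end Frobenius

section Orthogonal

variable {n k l : Type*} [Fintype n]

lemma toCols₁_transpose_mul_self_eq_one [DecidableEq k] [DecidableEq l]
    {D : Matrix n (k ⊕ l) ℝ} (hD : Dᵀ * D = 1) : D.toCols₁ᵀ * D.toCols₁ = 1 := by
  ext i j
  simpa [mul_apply, one_apply] using congr_fun₂ hD (Sum.inl i) (Sum.inl j)

lemma orthonormal_cols_of_transpose_mul_self_eq_one [DecidableEq k] {D : Matrix n k ℝ}
    (hD : Dᵀ * D = 1) :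
    Orthonormal ℝ fun j => WithLp.toLp 2 (fun i => D i j) := by
  rw [orthonormal_iff_ite]
  intro j j'
  rw [EuclideanSpace.inner_toLp_toLp]
  simpa [mul_apply, one_apply, dotProduct, mul_comm] using congr_fun₂ hD j j'

lemma card_le_of_transpose_mul_self_eq_one [Fintype k] [DecidableEq k] {D : Matrix n k ℝ}
    (hD : Dᵀ * D = 1) :
    Fintype.card k ≤ Fintype.card n := by
  simpa using (orthonormal_cols_of_transpose_mul_self_eq_one hD).linearIndependent
    |>.fintype_card_le_finrank

lemma exists_orthogonal_toCols₁_eq [Fintype k] [Fintype l] [DecidableEq n] [DecidableEq k]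
    [DecidableEq l]
    {D : Matrix n k ℝ} (hD : Dᵀ * D = 1)
    (hcard : Fintype.card n = Fintype.card k + Fintype.card l) :
    ∃ Dt : Matrix n (k ⊕ l) ℝ, Dtᵀ * Dt = 1 ∧ Dt * Dtᵀ = 1 ∧ Dt.toCols₁ = D := by
  let v : k ⊕ l → EuclideanSpace ℝ n := Sum.elim (fun j => WithLp.toLp 2 fun i => D i j) 0
  have hv : Orthonormal ℝ ((Set.range Sum.inl).domRestrict v) := by
    rw [orthonormal_iff_ite]
    rintro ⟨-, j, rfl⟩ ⟨-, j', rfl⟩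
    simpa [Subtype.ext_iff, v, Set.domRestrict] using
      orthonormal_iff_ite.mp (orthonormal_cols_of_transpose_mul_self_eq_one hD) j j'
  obtain ⟨b, hb⟩ := hv.exists_orthonormalBasis_extension_of_card_eq (by simpa using hcard)
  let e := EuclideanSpace.basisFun n ℝ
  refine ⟨e.toBasis.toMatrix b, ?_, ?_, ?_⟩
  · simpa using e.toMatrix_orthonormalBasis_conjTranspose_mul_self b
  · simpa using e.toMatrix_orthonormalBasis_self_mul_conjTranspose b
  · ext i j
    simpa [e, v, Module.Basis.toMatrix_apply] using
      congrArg (fun x : EuclideanSpace ℝ n => x i) (hb (Sum.inl j) ⟨j, rfl⟩)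

end Orthogonal

theorem auxiliary_matrix_equivalence_general (m r s : ℕ)
    (𝒜 : Set (Matrix (Fin m) (Fin r) ℝ)) (γ : ℝ)
    (F : Matrix (Fin m) (Fin s) ℝ) :
    sInf {x : ℝ | ∃ A ∈ 𝒜, ∃ Du : Matrix (Fin r) (Fin s) ℝ,
        Duᵀ * Du = 1 ∧ x = frobSq (F - γ • (A * Du))} =
    sInf {x : ℝ | ∃ A ∈ 𝒜,
        ∃ Dt : Matrix (Fin r) (Fin s ⊕ Fin (r - s)) ℝ,
        ∃ Fc : Matrix (Fin m) (Fin (r - s)) ℝ,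
        Dtᵀ * Dt = 1 ∧ Dt * Dtᵀ = 1 ∧
        x = frobSq (Matrix.fromCols F Fc - γ • (A * Dt))} := by
  apply csInf_eq_csInf_of_forall_exists_le
  · rintro _ ⟨A, hA, Du, hDu, rfl⟩
    have hsr : s ≤ r := by simpa using card_le_of_transpose_mul_self_eq_one hDu
    obtain ⟨Dt, hDt, hDt', rfl⟩ :=
      exists_orthogonal_toCols₁_eq (l := Fin (r - s)) hDu (by simp [hsr])
    refine ⟨_, ⟨A, hA, Dt, γ • (A * Dt.toCols₂), hDt, hDt', rfl⟩, ?_⟩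
    rw [frobSq_fromCols_sub_smul_mul, sub_self, frobSq_zero, add_zero]
  · rintro _ ⟨A, hA, Dt, Fc, hDt, -, rfl⟩
    refine ⟨_, ⟨A, hA, Dt.toCols₁, toCols₁_transpose_mul_self_eq_one hDt, rfl⟩, ?_⟩
    rw [frobSq_fromCols_sub_smul_mul]
    exact le_add_of_nonneg_right (frobSq_nonneg _)

/-- Lemma 3: the hybrid precoding objective over column-orthonormal digital
precoders `D_u` equals the augmented objective over orthogonal `D̃ = (D_u, D_c)`
and an arbitrary auxiliary matrix `F_c` complementing `F̄` to `(F̄, F_c)`. -/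
theorem auxiliary_matrix_equivalence (m r s : ℕ) (hrs : s ≤ r)
    (𝒜 : Set (Matrix (Fin m) (Fin r) ℝ)) (γ : ℝ) (hγ : 0 < γ)
    (F : Matrix (Fin m) (Fin s) ℝ) :
    sInf {x : ℝ | ∃ A ∈ 𝒜, ∃ Du : Matrix (Fin r) (Fin s) ℝ,
        Duᵀ * Du = 1 ∧ x = frobSq (F - γ • (A * Du))} =
    sInf {x : ℝ | ∃ A ∈ 𝒜,
        ∃ Dt : Matrix (Fin r) (Fin s ⊕ Fin (r - s)) ℝ,
        ∃ Fc : Matrix (Fin m) (Fin (r - s)) ℝ,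
        Dtᵀ * Dt = 1 ∧ Dt * Dtᵀ = 1 ∧
        x = frobSq (Matrix.fromCols F Fc - γ • (A * Dt))} :=
  auxiliary_matrix_equivalence_general m r s 𝒜 γ F
end
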